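/- Let Γ ⊆ ℤ³ be a subgroup of index d³ such that d² divides a · b for all a, b ∈ Γ. Then Γ contains a vector of length exactly d. -/

import Mathlib

/-!
Minkowski's convex body theorem applied to `Γ ⊆ ℤ³`, which has covolume `d³`, and the open ball
of radius `√2 d`, whose volume `(8√2π/3) d³` exceeds `2³ d³`, gives `γ ∈ Γ \ {0}` with
`γ · γ < 2d²`. Since `d² ∣ γ · γ`, this forces `γ · γ = d²`.
-/

def dot3 (a b : Fin 3 → ℤ) : ℤ := a 0 * b 0 + a 1 * b 1 + a 2 * b 2

open Module MeasureTheory Metric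
open scoped ENNReal

theorem dot3_eq_dotProduct (a b : Fin 3 → ℤ) : dot3 a b = a ⬝ᵥ b := by
  simp [dot3, dotProduct, Fin.sum_univ_three]

theorem Int.eq_of_dvd_of_lt_two_mul {a b : ℤ} (ha : 0 < a) (hdvd : b ∣ a) (hlt : a < 2 * b) :
    a = b := by
  obtain ⟨k, rfl⟩ := hdvd
  have hb : 0 < b := by linarith
  have hk_pos : 0 < k := pos_of_mul_pos_right ha hb.le
  have hk_lt : k < 2 := lt_of_mul_lt_mul_left (by linarith) hb.le
  obtain rfl : k = 1 := by omega
  exact mul_one b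

section

variable {ι : Type*} [Fintype ι]

theorem AddSubgroup.nonempty_basis_of_index_ne_zero {Γ : AddSubgroup (ι → ℤ)} (hΓ : Γ.index ≠ 0) :
    Nonempty (Basis ι ℤ Γ.toIntSubmodule) := by
  have : Finite ((ι → ℤ) ⧸ Γ.toIntSubmodule) := AddSubgroup.index_ne_zero_iff_finite.mp hΓ
  have hrank := (Submodule.finiteQuotient_iff Γ.toIntSubmodule).mp this
  rw [finrank_fintype_fun_eq_card] at hrank
  exact ⟨(finBasisOfFinrankEq ℤ _ hrank).reindex (Fintype.equivFin ι).symm⟩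

theorem AddSubgroup.index_eq_natAbs_det_basis [DecidableEq ι] {Γ : AddSubgroup (ι → ℤ)}
    (b : Basis ι ℤ Γ.toIntSubmodule) :
    Γ.index = (Matrix.of fun i ↦ (b i : ι → ℤ)).det.natAbs := by
  rw [AddSubgroup.index_eq_natAbs_det (Pi.basisFun ℤ ι) Γ b, Pi.basisFun_det_apply]
  rfl

theorem exists_basis_intCast_of_det_ne_zero [DecidableEq ι] {v : ι → ι → ℤ}
    (hv : (Matrix.of v).det ≠ 0) : ∃ b : Basis ι ℝ (ι → ℝ), ∀ i, b i = Int.cast ∘ v i := by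
  have hdet : ((Matrix.of v).map (Int.cast : ℤ → ℝ)).det ≠ 0 := by
    rwa [← Int.cast_det, Int.cast_ne_zero]
  exact ⟨basisOfLinearIndependentOfCardEqFinrank' _
    (Matrix.linearIndependent_rows_of_det_ne_zero hdet) (by simp),
    fun i ↦ by simp only [coe_basisOfLinearIndependentOfCardEqFinrank']; rfl⟩

theorem AddSubgroup.exists_ne_zero_intCast_mem_of_index_mul_two_pow_lt_volume
    {Γ : AddSubgroup (ι → ℤ)} (hΓ : Γ.index ≠ 0) {s : Set (ι → ℝ)} (h_symm : ∀ x ∈ s, -x ∈ s)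
    (h_conv : Convex ℝ s) (h : Γ.index * 2 ^ Fintype.card ι < volume s) :
    ∃ γ ∈ Γ, γ ≠ 0 ∧ Int.cast ∘ γ ∈ s := by
  classical
  obtain ⟨bΓ⟩ := nonempty_basis_of_index_ne_zero hΓ
  have hindex := index_eq_natAbs_det_basis bΓ
  obtain ⟨b, hb⟩ := exists_basis_intCast_of_det_ne_zero (v := fun i ↦ (bΓ i : ι → ℤ))
    (by rw [← Int.natAbs_ne_zero, ← hindex]; exact hΓ)
  have hvol : volume (ZSpan.fundamentalDomain b) = Γ.index := by
    have hb_mat : Matrix.of b = (Matrix.of fun i ↦ (bΓ i : ι → ℤ)).map Int.cast := by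
      ext; simp [hb]
    rw [ZSpan.volume_fundamentalDomain, hb_mat, ← Int.cast_det, ← Int.cast_abs,
      Int.abs_eq_natAbs, hindex]
    exact ENNReal.ofReal_natCast _
  have : Countable (Submodule.span ℤ (Set.range b)).toAddSubgroup :=
    inferInstanceAs (Countable (Submodule.span ℤ (Set.range b)))
  obtain ⟨⟨x, hxL⟩, hx0, hxs⟩ := exists_ne_zero_mem_lattice_of_measure_mul_two_pow_lt_measure
    (ZSpan.isAddFundamentalDomain' b volume) h_symm h_conv (by simpa [hvol] using h)
  obtain ⟨c, hc⟩ := (Submodule.mem_span_range_iff_exists_fun ℤ).mp hxL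
  set γ := ∑ i, c i • (bΓ i : ι → ℤ)
  have hcast : Int.cast ∘ γ = x := by
    rw [← hc]
    change (Int.castAddHom ℝ).compLeft ι _ = _
    simp only [γ, map_sum, map_zsmul, hb]
    rfl
  refine ⟨γ, Γ.sum_mem fun i _ ↦ Γ.zsmul_mem (bΓ i).2 _, fun h0 ↦ hx0 ?_, hcast ▸ hxs⟩
  ext1
  change x = 0
  rw [← hcast, h0]
  exact funext fun _ ↦ Int.cast_zero

theorem AddSubgroup.exists_ne_zero_dotProduct_self_lt_of_index_mul_two_pow_lt_volume_ball
    {Γ : AddSubgroup (ι → ℤ)} (hΓ : Γ.index ≠ 0) {r : ℝ}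
    (h : Γ.index * 2 ^ Fintype.card ι < volume (ball (0 : EuclideanSpace ℝ ι) r)) :
    ∃ γ ∈ Γ, γ ≠ 0 ∧ ((γ ⬝ᵥ γ : ℤ) : ℝ) < r ^ 2 := by
  have h_conv : Convex ℝ (WithLp.toLp 2 ⁻¹' ball (0 : EuclideanSpace ℝ ι) r) :=
    (convex_ball 0 r).linear_preimage (WithLp.linearEquiv 2 ℝ (ι → ℝ)).symm.toLinearMap
  rw [← (PiLp.volume_preserving_toLp ι).measure_preimage
    measurableSet_ball.nullMeasurableSet] at h
  obtain ⟨γ, hγΓ, hγ0, hγs⟩ := exists_ne_zero_intCast_mem_of_index_mul_two_pow_lt_volume hΓ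
    (fun x hx ↦ by simpa using hx) h_conv h
  refine ⟨γ, hγΓ, hγ0, ?_⟩
  have hnorm : ‖WithLp.toLp 2 (Int.cast ∘ γ : ι → ℝ)‖ < r := mem_ball_zero_iff.mp hγs
  rw [← sq_lt_sq₀ (norm_nonneg _) ((norm_nonneg _).trans hnorm.le), EuclideanSpace.norm_sq_eq]
    at hnorm
  simpa [dotProduct, sq] using hnorm

end

theorem ofReal_pow_three_mul_two_pow_three_lt_volume_ball_sqrt_two_mul {a : ℝ} (ha : 0 < a) :
    ENNReal.ofReal a ^ 3 * 2 ^ 3 < volume (ball (0 : EuclideanSpace ℝ (Fin 3)) (√2 * a)) := by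
  have hπ := Real.pi_gt_three
  have h2 := Real.one_lt_sqrt_two
  rw [EuclideanSpace.volume_ball_fin_three, ← ENNReal.ofReal_pow ha.le,
    ← ENNReal.ofReal_pow (by positivity), show (2 : ℝ≥0∞) ^ 3 = ENNReal.ofReal (2 ^ 3) by simp,
    ← ENNReal.ofReal_mul (by positivity), ← ENNReal.ofReal_mul (by positivity),
    ENNReal.ofReal_lt_ofReal_iff (by positivity)]
  have hcube : (√2 * a) ^ 3 = 2 * √2 * a ^ 3 := by
    rw [mul_pow, pow_succ, Real.sq_sqrt zero_le_two]
  rw [hcube]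
  nlinarith [pow_pos ha 3, mul_lt_mul'' h2 hπ zero_le_one (by norm_num)]

/-- A subgroup of `ℤ³` of index `d³` in which all dot products are divisible by `d²`
contains a vector of length exactly `d`. -/
theorem exists_vector_of_length_d (Γ : AddSubgroup (Fin 3 → ℤ)) (d : ℕ) (hd : 0 < d)
    (hindex : Γ.index = d ^ 3)
    (hdot : ∀ a ∈ Γ, ∀ b ∈ Γ, (d : ℤ)^2 ∣ dot3 a b) :
    ∃ a ∈ Γ, dot3 a a = (d : ℤ)^2 := by
  have hvol :=
    ofReal_pow_three_mul_two_pow_three_lt_volume_ball_sqrt_two_mul (Nat.cast_pos.mpr hd)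
  rw [ENNReal.ofReal_natCast] at hvol
  obtain ⟨γ, hγΓ, hγ0, hγ_lt⟩ :=
    Γ.exists_ne_zero_dotProduct_self_lt_of_index_mul_two_pow_lt_volume_ball
      (by rw [hindex]; positivity) (r := √2 * d) (by simpa [hindex] using hvol)
  have hlt : γ ⬝ᵥ γ < 2 * (d : ℤ) ^ 2 := by
    rw [mul_pow, Real.sq_sqrt zero_le_two] at hγ_lt
    exact_mod_cast hγ_lt
  have hpos : 0 < γ ⬝ᵥ γ := by simpa using Matrix.dotProduct_self_star_pos_iff.mpr hγ0
  refine ⟨γ, hγΓ, ?_⟩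
  rw [dot3_eq_dotProduct]
  exact Int.eq_of_dvd_of_lt_two_mul hpos (dot3_eq_dotProduct γ γ ▸ hdot γ hγΓ γ hγΓ) hlt
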